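/- For every integer K ≥ 3 and every real α with 1/2 < α < K, the finite-precision GDoF per user is strictly smaller than the perfect-CSIT (W-curve) value: d_K(α) < d_2(α). Moreover d_K(α) = d_2(α) for α ∈ [0, 1/2]. -/

import Mathlib

noncomputable def dK (K : ℕ) (α : ℝ) : ℝ :=
  if α ≤ 1/2 then 1 - α
  else if α ≤ (K : ℝ)/((K : ℝ)+1) then ((K : ℝ)-2-((K : ℝ)-3)*α)/((K : ℝ)-1)
  else if α ≤ 1 then 1 - (((K : ℝ)-1)/(K : ℝ))*α
  else if α ≤ (K : ℝ) then α/(K : ℝ)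
  else 1

/-!
Beyond `α = 1/2` the W-curve is a minimum of two lines: `min α (1 - α/2)` on `(1/2, 1]` and
`min (α/2) 1` on `(1, ∞)`. For `K ≥ 3` every linear piece of `d_K` on these ranges lies strictly
below both lines, while for `α ≤ 1/2` all the curves equal `1 - α`.
-/

theorem dK_of_le_half (K : ℕ) {α : ℝ} (hα : α ≤ 1/2) : dK K α = 1 - α := if_pos hα

theorem dK_of_one_lt_of_le (K : ℕ) {α : ℝ} (h₁ : 1 < α) (h₂ : α ≤ K) : dK K α = α / K := by
  have hK : (K : ℝ) / (K + 1) < α :=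
    ((div_lt_one (by positivity)).2 (lt_add_one _)).trans h₁
  rw [dK, if_neg (by linarith), if_neg hK.not_ge, if_neg h₁.not_ge, if_pos h₂]

theorem dK_two_of_half_lt_of_le_one {α : ℝ} (h₁ : 1/2 < α) (h₂ : α ≤ 1) :
    dK 2 α = min α (1 - α/2) := by
  rw [dK, if_neg h₁.not_ge, if_pos h₂]
  norm_num
  split_ifs with h
  · rw [min_eq_left (by linarith)]
  · rw [min_eq_right (by linarith)]; ring

theorem dK_two_of_one_lt {α : ℝ} (h : 1 < α) : dK 2 α = min (α/2) 1 := by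
  rw [dK, if_neg (by linarith)]
  norm_num
  rw [if_neg (by linarith), if_neg h.not_ge]
  split_ifs with h₂
  · rw [min_eq_left (by linarith)]
  · rw [min_eq_right (by linarith)]

theorem dK_lt_min_of_half_lt_of_le_one {K : ℕ} (hK : 3 ≤ K) {α : ℝ} (h₁ : 1/2 < α)
    (h₂ : α ≤ 1) : dK K α < min α (1 - α/2) := by
  have hk : (3 : ℝ) ≤ K := by exact_mod_cast hK
  rw [dK, if_neg h₁.not_ge]
  split_ifs with hmid
  · have hα : α < 1 := hmid.trans_lt ((div_lt_one (by linarith)).2 (lt_add_one _))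
    refine lt_min ?_ ?_ <;> rw [div_lt_iff₀ (by linarith)] <;> nlinarith
  · have hα : 3/4 < α := by
      refine lt_of_le_of_lt ?_ (not_le.1 hmid)
      rw [div_le_div_iff₀ (by norm_num) (by linarith)]
      linarith
    have hc : 2/3 ≤ ((K : ℝ) - 1) / K := by
      rw [div_le_div_iff₀ (by norm_num) (by linarith)]
      linarith
    refine lt_min ?_ ?_ <;> nlinarith

theorem dK_lt_min_of_one_lt {K : ℕ} (hK : 3 ≤ K) {α : ℝ} (h₁ : 1 < α) (h₂ : α < K) :
    dK K α < min (α/2) 1 := by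
  have hk : (3 : ℝ) ≤ K := by exact_mod_cast hK
  rw [dK_of_one_lt_of_le K h₁ h₂.le]
  exact lt_min (div_lt_div_of_pos_left (by linarith) (by norm_num) (by linarith))
    ((div_lt_one (by linarith)).2 h₂)

theorem dK_lt_W_curve (K : ℕ) (hK : 3 ≤ K) :
    (∀ α : ℝ, 1/2 < α → α < (K : ℝ) → dK K α < dK 2 α) ∧
    (∀ α : ℝ, α ∈ Set.Icc (0 : ℝ) (1/2) → dK K α = dK 2 α) := by
  refine ⟨fun α h₁ h₂ => ?_, fun α hα => by rw [dK_of_le_half K hα.2, dK_of_le_half 2 hα.2]⟩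
  rcases le_or_gt α 1 with hle | hgt
  · rw [dK_two_of_half_lt_of_le_one h₁ hle]
    exact dK_lt_min_of_half_lt_of_le_one hK h₁ hle
  · rw [dK_two_of_one_lt hgt]
    exact dK_lt_min_of_one_lt hK hgt h₂
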